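/- Let k : (0,∞) → [0,∞) be nonincreasing and lower semicontinuous, and let σ be a locally finite positive Borel measure on ℝ^n satisfying a doubling condition. Then there exists C > 0 such that for every x ∈ ℝ^n and every r > 0, (1/C) k̄(r)(x) ≤ (1/σ(B(x,r))) ∫_{B(x,r)} k(|x−y|) dσ(y) ≤ C k̄(r)(x). -/

import Mathlib

open MeasureTheory ENNReal Set Metric
open scoped Classical ENNReal NNReal

noncomputable section

/-- We model `ℝ^n` as `EuclideanSpace ℝ (Fin n)`. -/
abbrev Euc (n : ℕ) := EuclideanSpace ℝ (Fin n)

/-- `k̄(r)(x) = (1/σ(B(x,r))) ∫_0^r k(s) σ(B(x,s)) ds/s`. -/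
def kbar (n : ℕ) (σ : Measure (Euc n)) (k : ℝ → ℝ) (r : ℝ) (x : Euc n) : ℝ≥0∞ :=
  (σ (ball x r))⁻¹ * ∫⁻ s in Ioo (0:ℝ) r, ENNReal.ofReal (k s / s) * σ (ball x s)

/-- `σ` is a doubling measure: `σ(B(x,2r)) ≤ C₀ σ(B(x,r))` for all `x`, `r > 0`. -/
def Doubling (n : ℕ) (σ : Measure (Euc n)) : Prop :=
  ∃ C₀ : ℝ, 0 < C₀ ∧ ∀ (x : Euc n) (r : ℝ), 0 < r →
    σ (ball x (2 * r)) ≤ ENNReal.ofReal C₀ * σ (ball x r)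

/-- The pair `(k,σ)` satisfies the logarithmic bounded oscillation (LBO) condition:
`sup_{y ∈ B(x,r)} k̄(r)(y) ≤ A inf_{y ∈ B(x,r)} k̄(r)(y)` uniformly in `x`, `r`. -/
def LBO (n : ℕ) (σ : Measure (Euc n)) (k : ℝ → ℝ) : Prop :=
  ∃ A : ℝ, 0 < A ∧ ∀ (x : Euc n) (r : ℝ), 0 < r →
    ∀ y ∈ ball x r, ∀ z ∈ ball x r, kbar n σ k r y ≤ ENNReal.ofReal A * kbar n σ k r z

/-!
Write `N = ∫₀^r k(s) σ(B(x,s)) ds/s` and `I = ∫_{B(x,r)} k(|x-y|) dσ(y)`; both inequalities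
come from Tonelli's theorem on sets `{(s, y) : |x - y| ∈ J(s)}`.
A ball of radius `s/8` centred at distance `3s/4` from `x` lies in the annulus
`s/2 ≤ |x-y| < s`, and its 16-fold dilate covers `B(x,s)`, so four doublings give
`σ(B(x,s)) ≤ D⁴ σ(annulus)`; on the annulus `k(|x-y|) ≥ k(s)`, and each `y` lies in the annuli
with `s ∈ (|x-y|, 2|x-y|]`, a set of `ds/s`-measure at most `1`. Hence `N ≤ D⁴ I`.
Conversely `k(d) ≤ 2 ∫_{d/2}^d k(s) ds/s` by monotonicity, and swapping the integrals gives
`I ≤ 2 ∫₀^r k(s) σ(B(x,2s)) ds/s ≤ 2D N`. Doubling also forces `σ {x} = 0` in positive dimension,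
so the value of `k` at `0` does not matter.
-/

open Filter Topology Function

theorem AntitoneOn.measurable_indicator {α β : Type*} [LinearOrder α] [TopologicalSpace α]
    [OrderClosedTopology α] [MeasurableSpace α] [BorelSpace α] [LinearOrder β]
    [TopologicalSpace β] [OrderTopology β] [SecondCountableTopology β] [MeasurableSpace β]
    [BorelSpace β] [Zero β]
    {f : α → β} {s : Set α} (hs : MeasurableSet s) (hf : AntitoneOn f s) :
    Measurable (s.indicator f) := by
  refine measurable_of_restrict_of_restrict_compl hs ?_ ?_
  · have : Antitone (s.domRestrict f) := fun a b hab => hf a.2 b.2 hab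
    convert this.measurable using 1
    ext a
    simp
  · convert measurable_const (a := (0 : β)) using 1
    ext a
    simp [indicator_of_notMem a.2]

theorem lintegral_mul_setLIntegral_comm {α β : Type*} [MeasurableSpace α] [MeasurableSpace β]
    {μ : Measure α} {ν : Measure β} [SFinite μ] [SFinite ν] {A : α → Set β}
    (hA : MeasurableSet {p : α × β | p.2 ∈ A p.1}) {f : α → ℝ≥0∞} {g : β → ℝ≥0∞}
    (hf : Measurable f) (hg : Measurable g) :
    ∫⁻ a, f a * ∫⁻ b in A a, g b ∂ν ∂μ = ∫⁻ b, g b * ∫⁻ a in {a | b ∈ A a}, f a ∂μ ∂ν := by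
  have hAa : ∀ a, MeasurableSet (A a) := fun a => measurable_prodMk_left hA
  have hAb : ∀ b, MeasurableSet {a | b ∈ A a} := fun b => measurable_prodMk_right hA
  have hF : Measurable (uncurry fun a b => f a * (A a).indicator g b) :=
    (hf.comp measurable_fst).mul ((hg.comp measurable_snd).indicator hA)
  calc ∫⁻ a, f a * ∫⁻ b in A a, g b ∂ν ∂μ
      = ∫⁻ a, ∫⁻ b, f a * (A a).indicator g b ∂ν ∂μ := by
        simp_rw [← lintegral_indicator (hAa _), lintegral_const_mul _ (hg.indicator (hAa _))]
    _ = ∫⁻ b, ∫⁻ a, f a * (A a).indicator g b ∂μ ∂ν := lintegral_lintegral_swap hF.aemeasurable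
    _ = ∫⁻ b, ∫⁻ a, g b * {a | b ∈ A a}.indicator f a ∂μ ∂ν := by
        refine lintegral_congr fun b => lintegral_congr fun a => ?_
        by_cases h : b ∈ A a <;> simp [h, mul_comm]
    _ = ∫⁻ b, g b * ∫⁻ a in {a | b ∈ A a}, f a ∂μ ∂ν := by
        simp_rw [lintegral_const_mul _ (hf.indicator (hAb _)), lintegral_indicator (hAb _)]

theorem AntitoneOn.le_two_mul_setLIntegral_Ioo_div {K : ℝ → ℝ≥0∞} (hK : AntitoneOn K (Ioi 0))
    {d : ℝ} (hd : 0 < d) : K d ≤ 2 * ∫⁻ s in Ioo (d / 2) d, K s / ENNReal.ofReal s := by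
  have hd' : ENNReal.ofReal d ≠ 0 := by simpa using hd
  calc K d = 2 * (K d / ENNReal.ofReal d * ENNReal.ofReal (d - d / 2)) := by
        rw [show d - d / 2 = d / 2 by ring, ENNReal.ofReal_div_of_pos two_pos, ENNReal.ofReal_ofNat,
          ← mul_div_assoc, ENNReal.div_mul_cancel hd' ENNReal.ofReal_ne_top,
          ENNReal.mul_div_cancel two_ne_zero ENNReal.ofNat_ne_top]
    _ = 2 * ∫⁻ _ in Ioo (d / 2) d, K d / ENNReal.ofReal d := by
        rw [setLIntegral_const, Real.volume_Ioo]
    _ ≤ 2 * ∫⁻ s in Ioo (d / 2) d, K s / ENNReal.ofReal s := by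
        gcongr 2 * ?_
        refine setLIntegral_mono' measurableSet_Ioo fun s hs => ?_
        have hs0 : 0 < s := by linarith [hs.1]
        exact ENNReal.div_le_div (hK hs0 hd hs.2.le) (ENNReal.ofReal_le_ofReal hs.2.le)

theorem setLIntegral_Ioc_two_mul_inv_le_one (d : ℝ) :
    ∫⁻ s in Ioc d (2 * d), (ENNReal.ofReal s)⁻¹ ≤ 1 := by
  rcases le_or_gt d 0 with hd | hd
  · rw [Ioc_eq_empty (by linarith), Measure.restrict_empty, lintegral_zero_measure]
    exact zero_le_one
  calc ∫⁻ s in Ioc d (2 * d), (ENNReal.ofReal s)⁻¹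
      ≤ ∫⁻ _ in Ioc d (2 * d), (ENNReal.ofReal d)⁻¹ := by
        refine setLIntegral_mono' measurableSet_Ioc fun s hs => ?_
        gcongr
        exact hs.1.le
    _ = 1 := by
        rw [setLIntegral_const, Real.volume_Ioc, show 2 * d - d = d by ring,
          ENNReal.inv_mul_cancel (by simpa using hd) ENNReal.ofReal_ne_top]

def IsDoublingWith {X : Type*} [PseudoMetricSpace X] [MeasurableSpace X] (μ : Measure X)
    (D : ℝ≥0) : Prop :=
  ∀ (x : X) (r : ℝ), 0 < r → μ (ball x (2 * r)) ≤ D * μ (ball x r)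

namespace IsDoublingWith

section PseudoMetricSpace

variable {X : Type*} [PseudoMetricSpace X] [MeasurableSpace X] {μ : Measure X} {D : ℝ≥0}

theorem measure_ball_two_pow_mul_le (hμ : IsDoublingWith μ D) (x : X) {r : ℝ} (hr : 0 < r)
    (m : ℕ) : μ (ball x (2 ^ m * r)) ≤ D ^ m * μ (ball x r) := by
  induction m with
  | zero => simp
  | succ m ih =>
    calc μ (ball x (2 ^ (m + 1) * r)) = μ (ball x (2 * (2 ^ m * r))) := by ring_nf
      _ ≤ D * μ (ball x (2 ^ m * r)) := hμ x _ (by positivity)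
      _ ≤ D * (D ^ m * μ (ball x r)) := by gcongr
      _ = D ^ (m + 1) * μ (ball x r) := by rw [pow_succ', mul_assoc]

end PseudoMetricSpace

section MetricSpace

variable {X : Type*} [MetricSpace X] [MeasurableSpace X] {μ : Measure X} {D : ℝ≥0}
  {K : ℝ → ℝ≥0∞}

theorem lintegral_ball_le_lintegral_radial [OpensMeasurableSpace X] [SFinite μ]
    (hμ : IsDoublingWith μ D) (hK : AntitoneOn K (Ioi 0)) (hKm : Measurable K) {x : X}
    (hx : μ {x} = 0) (r : ℝ) :
    ∫⁻ y in ball x r, K (dist x y) ∂μ ≤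
      2 * D * ∫⁻ s in Ioo 0 r, K s / ENNReal.ofReal s * μ (ball x s) := by
  set A : ℝ → Set X := fun s => ball x (2 * s)
  have hA : MeasurableSet {p : ℝ × X | p.2 ∈ A p.1} :=
    measurableSet_lt (f := fun p : ℝ × X => dist p.2 x) (by fun_prop) (by fun_prop)
  have hf : Measurable fun s => K s / ENNReal.ofReal s := by fun_prop
  calc ∫⁻ y in ball x r, K (dist x y) ∂μ
      ≤ ∫⁻ y in ball x r, 2 * ∫⁻ s in {s | y ∈ A s}, K s / ENNReal.ofReal s
          ∂volume.restrict (Ioo 0 r) ∂μ := by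
        refine lintegral_mono_ae ?_
        filter_upwards [ae_restrict_mem measurableSet_ball,
          ae_restrict_of_ae (measure_eq_zero_iff_ae_notMem.1 hx)] with y hyr hyx
        rw [mem_ball, dist_comm] at hyr
        have hd : 0 < dist x y := dist_pos.2 (Ne.symm hyx)
        refine (hK.le_two_mul_setLIntegral_Ioo_div hd).trans ?_
        gcongr 2 * ?_
        have hAy : MeasurableSet {s | y ∈ A s} := measurable_prodMk_right hA
        rw [Measure.restrict_restrict hAy]
        refine lintegral_mono_set fun s hs => ⟨?_, by linarith [hs.1], by linarith [hs.2]⟩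
        show dist y x < 2 * s
        linarith [hs.1, dist_comm x y]
    _ = 2 * ∫⁻ y in ball x r, 1 * ∫⁻ s in {s | y ∈ A s}, K s / ENNReal.ofReal s
          ∂volume.restrict (Ioo 0 r) ∂μ := by
        simp only [one_mul]
        exact lintegral_const_mul' _ _ (by simp)
    _ = 2 * ∫⁻ s in Ioo 0 r, K s / ENNReal.ofReal s * ∫⁻ _ in A s, 1 ∂μ.restrict (ball x r) := by
        rw [lintegral_mul_setLIntegral_comm hA hf measurable_const]
    _ ≤ 2 * ∫⁻ s in Ioo 0 r, K s / ENNReal.ofReal s * (D * μ (ball x s)) := by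
        gcongr 2 * ?_
        refine setLIntegral_mono' measurableSet_Ioo fun s hs => ?_
        rw [setLIntegral_const, one_mul]
        gcongr
        exact (Measure.restrict_apply_le _ _).trans (hμ x s hs.1)
    _ = 2 * D * ∫⁻ s in Ioo 0 r, K s / ENNReal.ofReal s * μ (ball x s) := by
        rw [mul_assoc, ← lintegral_const_mul' _ _ ENNReal.coe_ne_top]
        simp only [mul_left_comm]

end MetricSpace

section NormedSpace

variable {E : Type*} [NormedAddCommGroup E] [NormedSpace ℝ E] [Nontrivial E] [MeasurableSpace E]
  {μ : Measure E} {D : ℝ≥0} {K : ℝ → ℝ≥0∞}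

theorem measure_ball_le_mul_measure_annulus (hμ : IsDoublingWith μ D) (x : E)
    {s : ℝ} (hs : 0 < s) : μ (ball x s) ≤ D ^ 4 * μ (ball x s \ ball x (s / 2)) := by
  obtain ⟨v, hv⟩ := exists_norm_eq E (show 0 ≤ 3 * s / 4 by positivity)
  have hzx : dist (x + v) x = 3 * s / 4 := by simp [hv]
  calc μ (ball x s) ≤ μ (ball (x + v) (2 ^ 4 * (s / 8))) := by
        refine measure_mono fun y hy => ?_
        rw [mem_ball] at hy ⊢
        linarith [dist_triangle y x (x + v), dist_comm x (x + v)]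
    _ ≤ D ^ 4 * μ (ball (x + v) (s / 8)) := hμ.measure_ball_two_pow_mul_le _ (by positivity) 4
    _ ≤ D ^ 4 * μ (ball x s \ ball x (s / 2)) := by
        gcongr
        intro y hy
        rw [mem_ball] at hy
        simp only [Set.mem_sdiff, mem_ball, not_lt]
        constructor <;>
          linarith [dist_triangle y (x + v) x, dist_triangle (x + v) y x, dist_comm y (x + v)]

theorem measure_singleton [OpensMeasurableSpace E] [IsLocallyFiniteMeasure μ]
    (hμ : IsDoublingWith μ D) (x : E) : μ {x} = 0 := by
  have hpunct : ∀ t > 0, μ {x} ≤ D * μ (ball x t \ {x}) := by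
    intro t ht
    obtain ⟨v, hv⟩ := exists_norm_eq E (show 0 ≤ t / 2 by positivity)
    have hzx : dist (x + v) x = t / 2 := by simp [hv]
    calc μ {x} ≤ μ (ball (x + v) (2 * (t / 2))) := by
          refine measure_mono (singleton_subset_iff.2 ?_)
          rw [mem_ball, dist_comm, hzx]
          linarith
      _ ≤ D * μ (ball (x + v) (t / 2)) := hμ _ _ (by positivity)
      _ ≤ D * μ (ball x t \ {x}) := by
          gcongr
          intro y hy
          rw [mem_ball] at hy
          refine ⟨?_, fun hyx => ?_⟩
          · rw [mem_ball]
            linarith [dist_triangle y (x + v) x]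
          · rw [mem_singleton_iff.1 hyx, dist_comm, hzx] at hy
            exact lt_irrefl _ hy
  obtain ⟨ε, hε, hfin⟩ := (μ.finiteAt_nhds x).exists_mem_basis nhds_basis_ball
  have hempty : (⋂ t > (0 : ℝ), ball x t \ {x}) = ∅ := by
    refine eq_empty_iff_forall_notMem.2 fun y hy => ?_
    simp only [mem_iInter, Set.mem_sdiff, mem_ball, mem_singleton_iff] at hy
    exact lt_irrefl _ (hy _ (dist_pos.2 (hy 1 one_pos).2)).1
  have hlim : Tendsto (fun t => μ (ball x t \ {x})) (𝓝[>] 0) (𝓝 0) := by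
    have := tendsto_measure_biInter_gt (μ := μ) (s := fun t => ball x t \ {x}) (a := 0)
      (fun t _ => (measurableSet_ball.diff (measurableSet_singleton x)).nullMeasurableSet)
      (fun i j _ hij => sdiff_subset_sdiff_left (ball_subset_ball hij))
      ⟨ε, hε, (measure_mono sdiff_subset).trans_lt hfin |>.ne⟩
    rwa [hempty, measure_empty] at this
  have := ENNReal.Tendsto.const_mul hlim (Or.inr (ENNReal.coe_ne_top (r := D)))
  rw [mul_zero] at this
  exact nonpos_iff_eq_zero.1 (ge_of_tendsto this (eventually_nhdsWithin_of_forall hpunct))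

theorem mul_measure_ball_le_setLIntegral_annulus [OpensMeasurableSpace E]
    (hμ : IsDoublingWith μ D) (hK : AntitoneOn K (Ioi 0)) (x : E) {s : ℝ} (hs : 0 < s) :
    K s * μ (ball x s) ≤ D ^ 4 * ∫⁻ y in ball x s \ ball x (s / 2), K (dist x y) ∂μ := by
  calc K s * μ (ball x s) ≤ K s * (D ^ 4 * μ (ball x s \ ball x (s / 2))) := by
        gcongr
        exact hμ.measure_ball_le_mul_measure_annulus x hs
    _ = D ^ 4 * ∫⁻ _ in ball x s \ ball x (s / 2), K s ∂μ := by
        rw [setLIntegral_const]; ring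
    _ ≤ D ^ 4 * ∫⁻ y in ball x s \ ball x (s / 2), K (dist x y) ∂μ := by
        gcongr D ^ 4 * ?_
        refine setLIntegral_mono' (measurableSet_ball.diff measurableSet_ball) fun y hy => ?_
        simp only [Set.mem_sdiff, mem_ball, not_lt, dist_comm y x] at hy
        exact hK (show 0 < dist x y by linarith [hy.2]) hs hy.1.le

theorem lintegral_radial_le_lintegral_ball [OpensMeasurableSpace E] [SFinite μ]
    (hμ : IsDoublingWith μ D) (hK : AntitoneOn K (Ioi 0)) (hKm : Measurable K) (x : E)
    (r : ℝ) :
    ∫⁻ s in Ioo 0 r, K s / ENNReal.ofReal s * μ (ball x s) ≤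
      D ^ 4 * ∫⁻ y in ball x r, K (dist x y) ∂μ := by
  set A : ℝ → Set E := fun s => ball x s \ ball x (s / 2)
  have hA : MeasurableSet {p : ℝ × E | p.2 ∈ A p.1} :=
    (measurableSet_lt (by fun_prop) measurable_fst).diff
      (measurableSet_lt (by fun_prop) (by fun_prop))
  have hKd : Measurable fun y => K (dist x y) := hKm.comp (by fun_prop)
  have hAr : ∀ s ∈ Ioo 0 r, A s ⊆ ball x r := fun s hs =>
    sdiff_subset.trans (ball_subset_ball hs.2.le)
  calc ∫⁻ s in Ioo 0 r, K s / ENNReal.ofReal s * μ (ball x s)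
      ≤ ∫⁻ s in Ioo 0 r, D ^ 4 *
          ((ENNReal.ofReal s)⁻¹ * ∫⁻ y in A s, K (dist x y) ∂μ.restrict (ball x r)) := by
        refine setLIntegral_mono' measurableSet_Ioo fun s hs => ?_
        rw [Measure.restrict_restrict_of_subset (hAr s hs)]
        calc K s / ENNReal.ofReal s * μ (ball x s)
            = (ENNReal.ofReal s)⁻¹ * (K s * μ (ball x s)) := by rw [div_eq_mul_inv]; ring
          _ ≤ (ENNReal.ofReal s)⁻¹ * (D ^ 4 * ∫⁻ y in A s, K (dist x y) ∂μ) := by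
              gcongr _ * ?_
              exact hμ.mul_measure_ball_le_setLIntegral_annulus hK x hs.1
          _ = D ^ 4 * ((ENNReal.ofReal s)⁻¹ * ∫⁻ y in A s, K (dist x y) ∂μ) := by ring
    _ = D ^ 4 * ∫⁻ s in Ioo 0 r, (ENNReal.ofReal s)⁻¹ *
          ∫⁻ y in A s, K (dist x y) ∂μ.restrict (ball x r) :=
        lintegral_const_mul' _ _ (by simp)
    _ = D ^ 4 * ∫⁻ y in ball x r, K (dist x y) *
          ∫⁻ s in {s | y ∈ A s}, (ENNReal.ofReal s)⁻¹ ∂volume.restrict (Ioo 0 r) ∂μ := by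
        rw [lintegral_mul_setLIntegral_comm hA (by fun_prop) hKd]
    _ ≤ D ^ 4 * ∫⁻ y in ball x r, K (dist x y) ∂μ := by
        gcongr D ^ 4 * ?_
        refine lintegral_mono fun y => mul_le_of_le_one_right' ?_
        calc ∫⁻ s in {s | y ∈ A s}, (ENNReal.ofReal s)⁻¹ ∂volume.restrict (Ioo 0 r)
            ≤ ∫⁻ s in {s | y ∈ A s}, (ENNReal.ofReal s)⁻¹ :=
              lintegral_mono' (Measure.restrict_mono subset_rfl Measure.restrict_le_self) le_rfl
          _ ≤ ∫⁻ s in Ioc (dist x y) (2 * dist x y), (ENNReal.ofReal s)⁻¹ := by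
              refine lintegral_mono_set fun s hs => ?_
              simp only [A, Set.mem_ofPred_eq, Set.mem_sdiff, mem_ball, not_lt, dist_comm y x] at hs
              exact ⟨hs.1, by linarith [hs.2]⟩
          _ ≤ 1 := setLIntegral_Ioc_two_mul_inv_le_one _

end NormedSpace

end IsDoublingWith

theorem ENNReal.ofReal_inv_mul_le_and_le_ofReal_mul {a b m : ℝ≥0∞} {C : ℝ≥0} (hC : C ≠ 0)
    (hab : a ≤ C * b) (hba : b ≤ C * a) :
    ENNReal.ofReal (C : ℝ)⁻¹ * (m * a) ≤ m * b ∧ m * b ≤ ENNReal.ofReal C * (m * a) := by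
  rw [← NNReal.coe_inv, ENNReal.ofReal_coe_nnreal, ENNReal.ofReal_coe_nnreal,
    ENNReal.coe_inv hC]
  constructor
  · calc (C : ℝ≥0∞)⁻¹ * (m * a) ≤ (C : ℝ≥0∞)⁻¹ * (m * (C * b)) := by gcongr
      _ = ((C : ℝ≥0∞)⁻¹ * C) * (m * b) := by ring
      _ = m * b := by rw [ENNReal.inv_mul_cancel (by simpa using hC) ENNReal.coe_ne_top, one_mul]
  · calc m * b ≤ m * (C * a) := by gcongr
      _ = C * (m * a) := by ring

theorem stmt12_general (n : ℕ) (hn : 0 < n) (k : ℝ → ℝ)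
    (hmono : AntitoneOn k (Ioi (0:ℝ)))
    (σ : Measure (Euc n)) [IsLocallyFiniteMeasure σ] (hσ : Doubling n σ) :
    ∃ C : ℝ, 0 < C ∧ ∀ (x : Euc n) (r : ℝ), 0 < r →
      ENNReal.ofReal C⁻¹ * kbar n σ k r x ≤
          (σ (ball x r))⁻¹ * ∫⁻ y in ball x r, ENNReal.ofReal (k (dist x y)) ∂σ ∧
        (σ (ball x r))⁻¹ * (∫⁻ y in ball x r, ENNReal.ofReal (k (dist x y)) ∂σ) ≤
          ENNReal.ofReal C * kbar n σ k r x := by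
  obtain ⟨C₀, hC₀, hdoubling⟩ := hσ
  set D := C₀.toNNReal
  have hμ : IsDoublingWith σ D := hdoubling
  have hD : 0 < D := Real.toNNReal_pos.2 hC₀
  have : Nonempty (Fin n) := ⟨⟨0, hn⟩⟩
  -- `k` is arbitrary on `(-∞, 0]`; cutting it off there makes the kernel measurable, and the
  -- only point where the cut matters, `y = x`, is `σ`-null.
  set K := (Ioi (0 : ℝ)).indicator fun t => ENNReal.ofReal (k t)
  have hKanti : AntitoneOn (fun t => ENNReal.ofReal (k t)) (Ioi 0) :=
    fun a ha b hb hab => ENNReal.ofReal_le_ofReal (hmono ha hb hab)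
  have hK : AntitoneOn K (Ioi 0) :=
    hKanti.congr fun t ht => (indicator_of_mem ht (fun t => ENNReal.ofReal (k t))).symm
  have hKm : Measurable K := hKanti.measurable_indicator measurableSet_Ioi
  set C : ℝ≥0 := D ^ 4 + 2 * D
  have hC : 0 < C := by positivity
  refine ⟨C, NNReal.coe_pos.2 hC, fun x r _ => ?_⟩
  have hball : ∫⁻ y in ball x r, ENNReal.ofReal (k (dist x y)) ∂σ =
      ∫⁻ y in ball x r, K (dist x y) ∂σ := by
    refine lintegral_congr_ae (ae_restrict_of_ae ?_)
    filter_upwards [measure_eq_zero_iff_ae_notMem.1 (hμ.measure_singleton x)] with y hy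
    exact (indicator_of_mem (dist_pos.2 (Ne.symm hy)) (fun t => ENNReal.ofReal (k t))).symm
  have hradial : ∫⁻ s in Ioo 0 r, ENNReal.ofReal (k s / s) * σ (ball x s) =
      ∫⁻ s in Ioo 0 r, K s / ENNReal.ofReal s * σ (ball x s) := by
    refine setLIntegral_congr_fun measurableSet_Ioo fun s hs => ?_
    rw [ENNReal.ofReal_div_of_pos hs.1, show K s = _ from indicator_of_mem hs.1 _]
  unfold kbar
  rw [hball, hradial]
  refine ENNReal.ofReal_inv_mul_le_and_le_ofReal_mul hC.ne' ?_ ?_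
  · exact (hμ.lintegral_radial_le_lintegral_ball hK hKm x r).trans
      (by gcongr; exact_mod_cast (le_self_add : D ^ 4 ≤ C))
  · exact (hμ.lintegral_ball_le_lintegral_radial hK hKm (hμ.measure_singleton x) r).trans
      (by gcongr; exact_mod_cast (le_add_self : 2 * D ≤ C))

/-- If `k : (0,∞) → [0,∞)` is nonincreasing and lower semicontinuous and
`σ` is a locally finite positive Borel measure on `ℝ^n` satisfying a doubling condition,
then there is `C > 0` such that for all `x ∈ ℝ^n` and `r > 0`,
`(1/C) k̄(r)(x) ≤ (1/σ(B(x,r))) ∫_{B(x,r)} k(|x-y|) dσ(y) ≤ C k̄(r)(x)`. -/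
theorem stmt12 (n : ℕ) (hn : 0 < n) (k : ℝ → ℝ)
    (hk0 : ∀ r ∈ Ioi (0:ℝ), 0 ≤ k r) (hmono : AntitoneOn k (Ioi (0:ℝ)))
    (hlsc : LowerSemicontinuousOn k (Ioi (0:ℝ)))
    (σ : Measure (Euc n)) [IsLocallyFiniteMeasure σ] (hσ : Doubling n σ) :
    ∃ C : ℝ, 0 < C ∧ ∀ (x : Euc n) (r : ℝ), 0 < r →
      ENNReal.ofReal C⁻¹ * kbar n σ k r x ≤
          (σ (ball x r))⁻¹ * ∫⁻ y in ball x r, ENNReal.ofReal (k (dist x y)) ∂σ ∧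
        (σ (ball x r))⁻¹ * (∫⁻ y in ball x r, ENNReal.ofReal (k (dist x y)) ∂σ) ≤
          ENNReal.ofReal C * kbar n σ k r x :=
  stmt12_general n hn k hmono σ hσ
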